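/- Let f, g be regulated on (a,b), α strictly increasing, with D_α f and D_α g existing everywhere and D_α g of constant sign on (a,b). If the ratio (D_α f)/(D_α g) is increasing on (a,b), then for all a < s < t < b: (D_α f)(s)/(D_α g)(s) ≤ (f^-(t) - f^+(s))/(g^-(t) - g^+(s)) ≤ (D_α f)(t)/(D_α g)(t). -/

import Mathlib

open Filter Topology Function Set MeasureTheory

/-- `x` lies in the interval `(a, b)` with extended-real endpoints. -/
def MemI (a b : EReal) (x : ℝ) : Prop := a < (x : EReal) ∧ (x : EReal) < b

/-- `f` is regulated on `(a, b)`: both one-sided limits exist (as real numbers)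
at every point of `(a, b)`. -/
def RegulatedOn' (f : ℝ → ℝ) (a b : EReal) : Prop :=
  ∀ x : ℝ, MemI a b x →
    (∃ L : ℝ, Tendsto f (𝓝[<] x) (𝓝 L)) ∧ ∃ R : ℝ, Tendsto f (𝓝[>] x) (𝓝 R)

/-- The symmetric `α`-derivative of `f` at `x` equals `A`:
`(D_α f)(x) = lim_{h↓0} (f⁻(x+h) - f⁺(x-h)) / (α⁻(x+h) - α⁺(x-h))`. -/
def HasDerivAlpha (f α : ℝ → ℝ) (x A : ℝ) : Prop :=
  Tendsto (fun h : ℝ =>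
      (leftLim f (x + h) - rightLim f (x - h)) /
        (leftLim α (x + h) - rightLim α (x - h)))
    (𝓝[>] (0 : ℝ)) (𝓝 A)

/-- The filter of real numbers approaching `b : EReal` from the left (`x ↑ b`). -/
noncomputable def leftFilter (b : EReal) : Filter ℝ := comap (fun x : ℝ => (x : EReal)) (𝓝[<] b)

/-- The filter of real numbers approaching `a : EReal` from the right (`x ↓ a`). -/
noncomputable def rightFilter (a : EReal) : Filter ℝ := comap (fun x : ℝ => (x : EReal)) (𝓝[>] a)

/-! The key fact is a monotonicity principle: if `F` is regulated and `D_α F ≥ 0` on `(s, t)`,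
then `F⁺(s) ≤ F⁻(t)`. For `F + εα` the symmetric quotients are eventually positive at every
point, so `F⁺ + εα⁺` at `x - h` lies below `F⁻ + εα⁻` at `x + h`, and a continuous induction
along `[s, t]` gives `F⁺(s) + εα⁺(s) ≤ F⁻(t) + εα⁻(t)`; let `ε → 0`. If `D_α F > 0`, one
symmetric quotient at the midpoint makes the inequality strict. For `D_α g > 0` and
`r ≤ D_α f / D_α g` on `(s, t)`, the principle applied to `f - r g` and divided by
`g⁻(t) - g⁺(s) > 0` gives the lower bound; the upper bound follows by replacing `f` with `-f`,
and the case `D_α g < 0` by replacing `f, g` with `-f, -g`. -/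

section

variable {a b : EReal} {F G α : ℝ → ℝ} {x : ℝ}

theorem isOpen_setOf_memI (a b : EReal) : IsOpen {x : ℝ | MemI a b x} :=
  isOpen_Ioo.preimage continuous_coe_real_ereal

theorem ordConnected_setOf_memI (a b : EReal) : OrdConnected {x : ℝ | MemI a b x} :=
  ordConnected_Ioo.preimage_mono EReal.coe_strictMono.monotone

theorem memI_of_mem_Icc {s t : ℝ} (hs : MemI a b s) (ht : MemI a b t) (hx : x ∈ Icc s t) :
    MemI a b x :=
  (ordConnected_setOf_memI a b).out hs ht hx

theorem eventually_memI (hx : MemI a b x) : ∀ᶠ y in 𝓝 x, MemI a b y :=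
  (isOpen_setOf_memI a b).mem_nhds hx

theorem eventually_memI_sub_add (hx : MemI a b x) :
    ∀ᶠ h in 𝓝[>] (0 : ℝ), MemI a b (x - h) ∧ MemI a b (x + h) := by
  have hsub : Tendsto (x - ·) (𝓝 0) (𝓝 x) := (continuous_sub_left x).tendsto' 0 x (sub_zero x)
  have hadd : Tendsto (x + ·) (𝓝 0) (𝓝 x) := (continuous_const_add x).tendsto' 0 x (add_zero x)
  exact ((hsub.eventually (eventually_memI hx)).and
    (hadd.eventually (eventually_memI hx))).filter_mono nhdsWithin_le_nhds

theorem tendsto_of_eventually_tendsto_nhdsWithin {X Y : Type*} [TopologicalSpace X]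
    [TopologicalSpace Y] [RegularSpace Y] {F φ : X → Y} {s : Set X} {x : X} {L : Y}
    (hs : IsOpen s) (hF : Tendsto F (𝓝[s] x) (𝓝 L))
    (hφ : ∀ᶠ y in 𝓝[s] x, ∃ l ≤ 𝓝 y, l.NeBot ∧ Tendsto F l (𝓝 (φ y))) :
    Tendsto φ (𝓝[s] x) (𝓝 L) := by
  refine (closed_nhds_basis L).tendsto_right_iff.2 fun U ⟨hU, hUc⟩ => ?_
  filter_upwards [eventually_eventually_nhdsWithin.2 (hF hU), hφ, self_mem_nhdsWithin]
    with y hy ⟨l, hle, hne, hlim⟩ hys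
  exact hUc.mem_of_tendsto hlim (hle (hs.nhdsWithin_eq hys ▸ hy))

namespace RegulatedOn'

theorem tendsto_leftLim (hF : RegulatedOn' F a b) (hx : MemI a b x) :
    Tendsto F (𝓝[<] x) (𝓝 (leftLim F x)) :=
  tendsto_leftLim_of_tendsto (hF x hx).1

theorem tendsto_rightLim (hF : RegulatedOn' F a b) (hx : MemI a b x) :
    Tendsto F (𝓝[>] x) (𝓝 (rightLim F x)) :=
  tendsto_rightLim_of_tendsto (hF x hx).2

theorem tendsto_rightLim_nhdsGT (hF : RegulatedOn' F a b) (hx : MemI a b x) :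
    Tendsto (rightLim F) (𝓝[>] x) (𝓝 (rightLim F x)) :=
  tendsto_of_eventually_tendsto_nhdsWithin isOpen_Ioi (hF.tendsto_rightLim hx) <|
    (eventually_memI hx).filter_mono nhdsWithin_le_nhds |>.mono fun _ hy =>
      ⟨_, nhdsWithin_le_nhds, inferInstance, hF.tendsto_rightLim hy⟩

theorem tendsto_leftLim_nhdsGT (hF : RegulatedOn' F a b) (hx : MemI a b x) :
    Tendsto (leftLim F) (𝓝[>] x) (𝓝 (rightLim F x)) :=
  tendsto_of_eventually_tendsto_nhdsWithin isOpen_Ioi (hF.tendsto_rightLim hx) <|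
    (eventually_memI hx).filter_mono nhdsWithin_le_nhds |>.mono fun _ hy =>
      ⟨_, nhdsWithin_le_nhds, inferInstance, hF.tendsto_leftLim hy⟩

theorem tendsto_rightLim_nhdsLT (hF : RegulatedOn' F a b) (hx : MemI a b x) :
    Tendsto (rightLim F) (𝓝[<] x) (𝓝 (leftLim F x)) :=
  tendsto_of_eventually_tendsto_nhdsWithin isOpen_Iio (hF.tendsto_leftLim hx) <|
    (eventually_memI hx).filter_mono nhdsWithin_le_nhds |>.mono fun _ hy =>
      ⟨_, nhdsWithin_le_nhds, inferInstance, hF.tendsto_rightLim hy⟩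

theorem neg (hF : RegulatedOn' F a b) : RegulatedOn' (fun y => -F y) a b := fun _ hx =>
  ⟨⟨_, (hF.tendsto_leftLim hx).neg⟩, ⟨_, (hF.tendsto_rightLim hx).neg⟩⟩

theorem sub_const_mul (hF : RegulatedOn' F a b) (hG : RegulatedOn' G a b) (c : ℝ) :
    RegulatedOn' (fun y => F y - c * G y) a b := fun _ hx =>
  ⟨⟨_, (hF.tendsto_leftLim hx).sub ((hG.tendsto_leftLim hx).const_mul c)⟩,
    ⟨_, (hF.tendsto_rightLim hx).sub ((hG.tendsto_rightLim hx).const_mul c)⟩⟩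

theorem leftLim_sub_const_mul (hF : RegulatedOn' F a b) (hG : RegulatedOn' G a b) (c : ℝ)
    (hx : MemI a b x) :
    leftLim (fun y => F y - c * G y) x = leftLim F x - c * leftLim G x :=
  leftLim_eq_of_tendsto ((hF.tendsto_leftLim hx).sub ((hG.tendsto_leftLim hx).const_mul c))

theorem rightLim_sub_const_mul (hF : RegulatedOn' F a b) (hG : RegulatedOn' G a b) (c : ℝ)
    (hx : MemI a b x) :
    rightLim (fun y => F y - c * G y) x = rightLim F x - c * rightLim G x :=
  rightLim_eq_of_tendsto ((hF.tendsto_rightLim hx).sub ((hG.tendsto_rightLim hx).const_mul c))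

end RegulatedOn'

theorem leftLim_neg (F : ℝ → ℝ) (x : ℝ) : leftLim (fun y => -F y) x = -leftLim F x := by
  by_cases h : ∃ L, Tendsto F (𝓝[<] x) (𝓝 L)
  · exact leftLim_eq_of_tendsto (tendsto_leftLim_of_tendsto h).neg
  · have h' : ¬∃ L, Tendsto (fun y => -F y) (𝓝[<] x) (𝓝 L) := fun ⟨L, hL⟩ =>
      h ⟨-L, by simpa using hL.neg⟩
    rw [leftLim_eq_of_not_tendsto _ h, leftLim_eq_of_not_tendsto _ h']

theorem rightLim_neg (F : ℝ → ℝ) (x : ℝ) : rightLim (fun y => -F y) x = -rightLim F x := by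
  by_cases h : ∃ L, Tendsto F (𝓝[>] x) (𝓝 L)
  · exact rightLim_eq_of_tendsto (tendsto_rightLim_of_tendsto h).neg
  · have h' : ¬∃ L, Tendsto (fun y => -F y) (𝓝[>] x) (𝓝 L) := fun ⟨L, hL⟩ =>
      h ⟨-L, by simpa using hL.neg⟩
    rw [rightLim_eq_of_not_tendsto _ h, rightLim_eq_of_not_tendsto _ h']

theorem StrictMonoOn.regulatedOn' (hα : StrictMonoOn α {x | MemI a b x}) : RegulatedOn' α a b := by
  intro x hx
  obtain ⟨l, u, hlu, hsub⟩ :=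
    mem_nhds_iff_exists_Ioo_subset.1 (eventually_memI hx)
  have hmono := hα.monotoneOn
  refine ⟨⟨_, (hmono.mono ((Ioo_subset_Ioo_right hlu.2.le).trans hsub)).tendsto_nhdsWithin_Ioo_left
      (nonempty_Ioo.2 hlu.1) ⟨α x, ?_⟩⟩,
    ⟨_, (hmono.mono ((Ioo_subset_Ioo_left hlu.1.le).trans hsub)).tendsto_nhdsWithin_Ioo_right
      (nonempty_Ioo.2 hlu.2) ⟨α x, ?_⟩⟩⟩
  · rintro _ ⟨y, hy, rfl⟩
    exact hmono (hsub ⟨hy.1, hy.2.trans hlu.2⟩) hx hy.2.le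
  · rintro _ ⟨y, hy, rfl⟩
    exact hmono hx (hsub ⟨hlu.1.trans hy.1, hy.2⟩) hy.1.le

theorem StrictMonoOn.rightLim_lt_leftLim (hα : StrictMonoOn α {x | MemI a b x}) {p q : ℝ}
    (hp : MemI a b p) (hq : MemI a b q) (hpq : p < q) : rightLim α p < leftLim α q := by
  obtain ⟨m, hpm, hmq⟩ := exists_between hpq
  obtain ⟨m', hmm', hm'q⟩ := exists_between hmq
  have hI : ∀ y ∈ Icc p q, MemI a b y := fun _ => memI_of_mem_Icc hp hq
  calc rightLim α p ≤ α m :=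
        le_of_tendsto (hα.regulatedOn'.tendsto_rightLim hp) <| by
          filter_upwards [Ioo_mem_nhdsGT hpm] with z hz
          exact hα.monotoneOn (hI z ⟨hz.1.le, (hz.2.trans hmq).le⟩) (hI m ⟨hpm.le, hmq.le⟩) hz.2.le
    _ < α m' := hα (hI m ⟨hpm.le, hmq.le⟩) (hI m' ⟨(hpm.trans hmm').le, hm'q.le⟩) hmm'
    _ ≤ leftLim α q :=
        ge_of_tendsto (hα.regulatedOn'.tendsto_leftLim hq) <| by
          filter_upwards [Ioo_mem_nhdsLT hm'q] with z hz
          exact hα.monotoneOn (hI m' ⟨(hpm.trans hmm').le, hm'q.le⟩)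
            (hI z ⟨(hpm.trans (hmm'.trans hz.1)).le, hz.2.le⟩) hz.1.le

theorem StrictMonoOn.eventually_alphaDenom_pos (hα : StrictMonoOn α {x | MemI a b x})
    (hx : MemI a b x) :
    ∀ᶠ h in 𝓝[>] (0 : ℝ), 0 < leftLim α (x + h) - rightLim α (x - h) := by
  filter_upwards [eventually_memI_sub_add hx, self_mem_nhdsWithin] with h ⟨hl, hr⟩ (hh : 0 < h)
  exact sub_pos.2 (hα.rightLim_lt_leftLim hl hr (by linarith))

namespace HasDerivAlpha

theorem eventually_mul_lt {A c : ℝ} (hd : HasDerivAlpha F α x A) (hc : c < A)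
    (hden : ∀ᶠ h in 𝓝[>] (0 : ℝ), 0 < leftLim α (x + h) - rightLim α (x - h)) :
    ∀ᶠ h in 𝓝[>] (0 : ℝ), c * (leftLim α (x + h) - rightLim α (x - h)) <
      leftLim F (x + h) - rightLim F (x - h) := by
  filter_upwards [hd.eventually (lt_mem_nhds hc), hden] with h hq hpos
  exact (lt_div_iff₀ hpos).1 hq

theorem neg {A : ℝ} (hd : HasDerivAlpha F α x A) : HasDerivAlpha (fun y => -F y) α x (-A) := by
  simpa only [HasDerivAlpha, leftLim_neg, rightLim_neg, neg_sub_neg, ← neg_sub _ (rightLim F _),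
    neg_div] using Tendsto.neg hd

theorem sub_const_mul {A B : ℝ} (hF : RegulatedOn' F a b) (hG : RegulatedOn' G a b)
    (hx : MemI a b x) (hA : HasDerivAlpha F α x A) (hB : HasDerivAlpha G α x B) (c : ℝ) :
    HasDerivAlpha (fun y => F y - c * G y) α x (A - c * B) := by
  refine (hA.sub (hB.const_mul c)).congr' ?_
  filter_upwards [eventually_memI_sub_add hx] with h ⟨hl, hr⟩
  rw [hF.leftLim_sub_const_mul hG c hr, hF.rightLim_sub_const_mul hG c hl]
  ring

end HasDerivAlpha

end

/-- Continuous induction, for each `c < u s`, on `{x | c ≤ u on (s, x)}`: written as an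
intersection of half-lines `Iic y`, this set is closed. -/
theorem le_of_forall_eventually_sub_le_add {u v : ℝ → ℝ} {s t : ℝ} (hst : s < t)
    (hs : Tendsto u (𝓝[>] s) (𝓝 (u s))) (ht : Tendsto u (𝓝[<] t) (𝓝 (v t)))
    (hv : ∀ y ∈ Ioo s t, Tendsto v (𝓝[>] y) (𝓝 (u y)))
    (hsymm : ∀ x ∈ Ioo s t, ∀ᶠ h in 𝓝[>] (0 : ℝ), u (x - h) ≤ v (x + h)) :
    u s ≤ v t := by
  refine le_of_forall_lt_imp_le_of_dense fun c hc => ?_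
  set S := ⋂ y ∈ {y | s < y ∧ u y < c}, Iic y
  have hS : ∀ x, x ∈ S ↔ ∀ y ∈ Ioo s x, c ≤ u y := fun x => by
    simp only [S, mem_iInter, mem_Iic, mem_ofPred_eq, mem_Ioo]
    exact ⟨fun h y hy => le_of_not_gt fun hyc => (h y ⟨hy.1, hyc⟩).not_gt hy.2,
      fun h y hy => le_of_not_gt fun hxy => (h y ⟨hy.1, hxy⟩).not_gt hy.2⟩
  have hsS : s ∈ S := (hS s).2 fun y hy => absurd (hy.1.trans hy.2) (lt_irrefl s)
  have hstep : ∀ x ∈ S ∩ Ico s t, ∃ δ > x, δ ∈ S := by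
    rintro x ⟨hxS, hsx, hxt⟩
    rcases hsx.eq_or_lt with rfl | hsx
    · obtain ⟨δ, hδ, hsub⟩ := mem_nhdsGT_iff_exists_Ioo_subset.1 (hs.eventually (lt_mem_nhds hc))
      exact ⟨δ, hδ, (hS δ).2 fun y hy => (hsub hy).le⟩
    obtain ⟨δ₀, hδ₀, hsub⟩ := mem_nhdsGT_iff_exists_Ioo_subset.1 (hsymm x ⟨hsx, hxt⟩)
    set e := min δ₀ (min (x - s) (t - x))
    have he : 0 < e := lt_min hδ₀ (lt_min (by linarith) (by linarith))
    have hes : e ≤ x - s := (min_le_right _ _).trans (min_le_left _ _)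
    have het : e ≤ t - x := (min_le_right _ _).trans (min_le_right _ _)
    have hv_ge : ∀ z ∈ Ioo x (x + e), c ≤ v z := fun z hz =>
      calc c ≤ u (x - (z - x)) := (hS x).1 hxS _ ⟨by linarith [hz.2], by linarith [hz.1]⟩
        _ ≤ v (x + (z - x)) :=
          hsub ⟨by linarith [hz.1], by linarith [hz.2, min_le_left δ₀ (min (x - s) (t - x))]⟩
        _ = v z := by ring_nf
    have hu_ge : ∀ y ∈ Ico x (x + e), c ≤ u y := fun y hy =>
      ge_of_tendsto (hv y ⟨by linarith [hy.1], by linarith [hy.2]⟩) <| by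
        filter_upwards [Ioo_mem_nhdsGT hy.2] with z hz using hv_ge z ⟨hy.1.trans_lt hz.1, hz.2⟩
    refine ⟨x + e, by linarith, (hS _).2 fun y hy => ?_⟩
    rcases lt_or_ge y x with hyx | hxy
    · exact (hS x).1 hxS y ⟨hy.1, hyx⟩
    · exact hu_ge y ⟨hxy, hy.2⟩
  have hgt : ∀ x ∈ S ∩ Ico s t, S ∈ 𝓝[>] x := fun x hx => by
    obtain ⟨δ, hxδ, hδ⟩ := hstep x hx
    filter_upwards [Ioo_mem_nhdsGT hxδ] with z hz
    exact (hS z).2 fun y hy => (hS δ).1 hδ y ⟨hy.1, hy.2.trans hz.2⟩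
  have htS : t ∈ S := ((isClosed_biInter fun _ _ => isClosed_Iic).inter isClosed_Icc
    |>.Icc_subset_of_forall_mem_nhdsWithin hsS hgt) ⟨hst.le, le_rfl⟩
  exact ge_of_tendsto ht <| by
    filter_upwards [Ioo_mem_nhdsLT hst] with y hy using (hS t).1 htS y hy

section

variable {a b : EReal} {F f g α Df Dg : ℝ → ℝ} {s t : ℝ}

theorem rightLim_le_leftLim_of_hasDerivAlpha_nonneg (hα : StrictMonoOn α {x | MemI a b x})
    (hF : RegulatedOn' F a b) {D : ℝ → ℝ} (hs : MemI a b s) (ht : MemI a b t) (hst : s < t)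
    (hD : ∀ x ∈ Ioo s t, HasDerivAlpha F α x (D x)) (hD0 : ∀ x ∈ Ioo s t, 0 ≤ D x) :
    rightLim F s ≤ leftLim F t := by
  have hαr := hα.regulatedOn'
  have hI : ∀ x ∈ Ioo s t, MemI a b x := fun _ hx => memI_of_mem_Icc hs ht (Ioo_subset_Icc_self hx)
  have key : ∀ ε > 0, rightLim F s + ε * rightLim α s ≤ leftLim F t + ε * leftLim α t := by
    intro ε hε
    refine le_of_forall_eventually_sub_le_add (u := fun y => rightLim F y + ε * rightLim α y)
      (v := fun y => leftLim F y + ε * leftLim α y) hst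
      ((hF.tendsto_rightLim_nhdsGT hs).add ((hαr.tendsto_rightLim_nhdsGT hs).const_mul ε))
      ((hF.tendsto_rightLim_nhdsLT ht).add ((hαr.tendsto_rightLim_nhdsLT ht).const_mul ε))
      (fun y hy => (hF.tendsto_leftLim_nhdsGT (hI y hy)).add
        ((hαr.tendsto_leftLim_nhdsGT (hI y hy)).const_mul ε)) fun x hx => ?_
    filter_upwards [(hD x hx).eventually_mul_lt (show -ε < D x by linarith [hD0 x hx])
      (hα.eventually_alphaDenom_pos (hI x hx))] with h hh
    linarith
  have hlim : Tendsto (fun ε => leftLim F t + ε * (leftLim α t - rightLim α s)) (𝓝[>] 0)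
      (𝓝 (leftLim F t)) := by
    simpa using (tendsto_nhdsWithin_of_tendsto_nhds (tendsto_id (x := 𝓝 (0 : ℝ)))).mul_const
      (leftLim α t - rightLim α s) |>.const_add (leftLim F t)
  exact ge_of_tendsto hlim (eventually_nhdsWithin_of_forall fun ε hε => by linarith [key ε hε])

theorem rightLim_lt_leftLim_of_hasDerivAlpha_pos (hα : StrictMonoOn α {x | MemI a b x})
    (hF : RegulatedOn' F a b) {D : ℝ → ℝ} (hs : MemI a b s) (ht : MemI a b t) (hst : s < t)
    (hD : ∀ x ∈ Ioo s t, HasDerivAlpha F α x (D x)) (hD0 : ∀ x ∈ Ioo s t, 0 < D x) :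
    rightLim F s < leftLim F t := by
  have hI : ∀ x ∈ Icc s t, MemI a b x := fun _ => memI_of_mem_Icc hs ht
  have hmono : ∀ p q, s ≤ p → q ≤ t → p < q → rightLim F p ≤ leftLim F q := fun p q hsp hqt hpq =>
    rightLim_le_leftLim_of_hasDerivAlpha_nonneg hα hF (hI p ⟨hsp, hpq.le.trans hqt⟩)
      (hI q ⟨hsp.trans hpq.le, hqt⟩) hpq (fun x hx => hD x ⟨hsp.trans_lt hx.1, hx.2.trans_le hqt⟩)
      fun x hx => (hD0 x ⟨hsp.trans_lt hx.1, hx.2.trans_le hqt⟩).le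
  set x := (s + t) / 2 with hx_def
  have hx : x ∈ Ioo s t := ⟨by linarith, by linarith⟩
  obtain ⟨h, hlt, hh0, hh⟩ := ((hD x hx).eventually_mul_lt (hD0 x hx)
    (hα.eventually_alphaDenom_pos (hI x (Ioo_subset_Icc_self hx)))).and
    (Ioo_mem_nhdsGT (show (0 : ℝ) < x - s by linarith)) |>.exists
  have hleft : rightLim F s ≤ rightLim F (x - h) :=
    ge_of_tendsto (hF.tendsto_leftLim_nhdsGT (hI _ ⟨by linarith, by linarith⟩)) <| by
      filter_upwards [Ioo_mem_nhdsGT (show x - h < x by linarith)] with z hz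
      exact hmono s z le_rfl (by linarith [hz.2]) (by linarith [hz.1])
  have hright : leftLim F (x + h) ≤ leftLim F t :=
    le_of_tendsto (hF.tendsto_rightLim_nhdsLT (hI _ ⟨by linarith, by linarith⟩)) <| by
      filter_upwards [Ioo_mem_nhdsLT (show x < x + h by linarith)] with z hz
      exact hmono z t (by linarith [hz.1]) le_rfl (by linarith [hz.2])
  linarith

theorem le_diffQuot_of_forall_le_ratio (hα : StrictMonoOn α {x | MemI a b x})
    (hf : RegulatedOn' f a b) (hg : RegulatedOn' g a b) (hs : MemI a b s) (ht : MemI a b t)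
    (hst : s < t) (hDf : ∀ x ∈ Ioo s t, HasDerivAlpha f α x (Df x))
    (hDg : ∀ x ∈ Ioo s t, HasDerivAlpha g α x (Dg x)) (hpos : ∀ x ∈ Ioo s t, 0 < Dg x) {r : ℝ}
    (hr : ∀ x ∈ Ioo s t, r ≤ Df x / Dg x) :
    r ≤ (leftLim f t - rightLim f s) / (leftLim g t - rightLim g s) := by
  have hI : ∀ x ∈ Ioo s t, MemI a b x := fun _ hx => memI_of_mem_Icc hs ht (Ioo_subset_Icc_self hx)
  have hg_lt := rightLim_lt_leftLim_of_hasDerivAlpha_pos hα hg hs ht hst hDg hpos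
  have hmono := rightLim_le_leftLim_of_hasDerivAlpha_nonneg hα (hf.sub_const_mul hg r) hs ht hst
    (fun x hx => (hDf x hx).sub_const_mul hf hg (hI x hx) (hDg x hx) r)
    fun x hx => sub_nonneg.2 ((le_div_iff₀ (hpos x hx)).1 (hr x hx))
  rw [hf.rightLim_sub_const_mul hg r hs, hf.leftLim_sub_const_mul hg r ht] at hmono
  rw [le_div_iff₀ (sub_pos.2 hg_lt)]
  linarith

theorem diffQuot_le_of_forall_ratio_le (hα : StrictMonoOn α {x | MemI a b x})
    (hf : RegulatedOn' f a b) (hg : RegulatedOn' g a b) (hs : MemI a b s) (ht : MemI a b t)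
    (hst : s < t) (hDf : ∀ x ∈ Ioo s t, HasDerivAlpha f α x (Df x))
    (hDg : ∀ x ∈ Ioo s t, HasDerivAlpha g α x (Dg x)) (hpos : ∀ x ∈ Ioo s t, 0 < Dg x) {r : ℝ}
    (hr : ∀ x ∈ Ioo s t, Df x / Dg x ≤ r) :
    (leftLim f t - rightLim f s) / (leftLim g t - rightLim g s) ≤ r := by
  have := le_diffQuot_of_forall_le_ratio hα hf.neg hg hs ht hst (fun x hx => (hDf x hx).neg) hDg
    hpos (r := -r) fun x hx => by simpa only [neg_div, neg_le_neg_iff] using hr x hx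
  rwa [leftLim_neg, rightLim_neg, neg_sub_neg, ← neg_sub, neg_div, neg_le_neg_iff] at this

theorem diffQuot_neg_neg (f g : ℝ → ℝ) (s t : ℝ) :
    (leftLim (fun y => -f y) t - rightLim (fun y => -f y) s) /
        (leftLim (fun y => -g y) t - rightLim (fun y => -g y) s) =
      (leftLim f t - rightLim f s) / (leftLim g t - rightLim g s) := by
  rw [leftLim_neg, leftLim_neg, rightLim_neg, rightLim_neg, neg_sub_neg, neg_sub_neg,
    ← neg_div_neg_eq, neg_sub, neg_sub]

end

theorem stmt14_general (a b : EReal) (f g α : ℝ → ℝ) (Df Dg : ℝ → ℝ)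
    (hf : RegulatedOn' f a b) (hg : RegulatedOn' g a b)
    (hα : StrictMonoOn α {x : ℝ | MemI a b x})
    (hDf : ∀ x : ℝ, MemI a b x → HasDerivAlpha f α x (Df x))
    (hDg : ∀ x : ℝ, MemI a b x → HasDerivAlpha g α x (Dg x))
    (hsign : (∀ x : ℝ, MemI a b x → 0 < Dg x) ∨ (∀ x : ℝ, MemI a b x → Dg x < 0))
    (hmono : MonotoneOn (fun x => Df x / Dg x) {x : ℝ | MemI a b x}) :
    ∀ s t : ℝ, MemI a b s → MemI a b t → s < t →
      Df s / Dg s ≤ (leftLim f t - rightLim f s) / (leftLim g t - rightLim g s) ∧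
      (leftLim f t - rightLim f s) / (leftLim g t - rightLim g s) ≤ Df t / Dg t := by
  intro s t hs ht hst
  have hI : ∀ x ∈ Ioo s t, MemI a b x := fun _ hx => memI_of_mem_Icc hs ht (Ioo_subset_Icc_self hx)
  have hlo : ∀ x ∈ Ioo s t, Df s / Dg s ≤ Df x / Dg x := fun x hx => hmono hs (hI x hx) hx.1.le
  have hhi : ∀ x ∈ Ioo s t, Df x / Dg x ≤ Df t / Dg t := fun x hx => hmono (hI x hx) ht hx.2.le
  rcases hsign with hpos | hneg
  · exact ⟨le_diffQuot_of_forall_le_ratio hα hf hg hs ht hst (fun x hx => hDf x (hI x hx))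
      (fun x hx => hDg x (hI x hx)) (fun x hx => hpos x (hI x hx)) hlo,
      diffQuot_le_of_forall_ratio_le hα hf hg hs ht hst (fun x hx => hDf x (hI x hx))
      (fun x hx => hDg x (hI x hx)) (fun x hx => hpos x (hI x hx)) hhi⟩
  · have hDf' x (hx : x ∈ Ioo s t) := (hDf x (hI x hx)).neg
    have hDg' x (hx : x ∈ Ioo s t) := (hDg x (hI x hx)).neg
    have hpos x (hx : x ∈ Ioo s t) : 0 < -Dg x := neg_pos.2 (hneg x (hI x hx))
    simp only [← neg_div_neg_eq (Df _)] at hlo hhi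
    rw [← diffQuot_neg_neg, ← neg_div_neg_eq (Df s), ← neg_div_neg_eq (Df t)]
    exact ⟨le_diffQuot_of_forall_le_ratio hα hf.neg hg.neg hs ht hst hDf' hDg' hpos hlo,
      diffQuot_le_of_forall_ratio_le hα hf.neg hg.neg hs ht hst hDf' hDg' hpos hhi⟩

/-- If `(D_α f)/(D_α g)` is increasing on `(a,b)` and `D_α g` has constant sign,
then the difference quotient is bracketed by the endpoint values of the ratio. -/
theorem stmt14 (a b : EReal) (hab : a < b) (f g α : ℝ → ℝ) (Df Dg : ℝ → ℝ)
    (hf : RegulatedOn' f a b) (hg : RegulatedOn' g a b)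
    (hα : StrictMonoOn α {x : ℝ | MemI a b x})
    (hDf : ∀ x : ℝ, MemI a b x → HasDerivAlpha f α x (Df x))
    (hDg : ∀ x : ℝ, MemI a b x → HasDerivAlpha g α x (Dg x))
    (hsign : (∀ x : ℝ, MemI a b x → 0 < Dg x) ∨ (∀ x : ℝ, MemI a b x → Dg x < 0))
    (hmono : MonotoneOn (fun x => Df x / Dg x) {x : ℝ | MemI a b x}) :
    ∀ s t : ℝ, MemI a b s → MemI a b t → s < t →
      Df s / Dg s ≤ (leftLim f t - rightLim f s) / (leftLim g t - rightLim g s) ∧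
      (leftLim f t - rightLim f s) / (leftLim g t - rightLim g s) ≤ Df t / Dg t :=
  stmt14_general a b f g α Df Dg hf hg hα hDf hDg hsign hmono
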